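/- Let α1 be a Perron number of degree 2 with conjugate α2 (so α1 > |α2| and α1 α2 ∈ Z). If α1 α2 ∉ {1, -1}, then any relation α1^{m1} α2^{m2} = 1 with m1, m2 ∈ Z implies m1 = m2 = 0. -/

import Mathlib

open Polynomial

/-- Powers of a root of `x^2 = t x - n` are integer-linear in the root,
with coefficients depending only on `t, n, k`. -/
lemma exists_lin (t n : ℤ) (k : ℕ) :
    ∃ a b : ℤ, ∀ x : ℝ, x ^ 2 = t * x - n → x ^ k = a + b * x := by
  induction k with
  | zero => exact ⟨1, 0, fun x _ => by simp⟩
  | succ k ih =>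
    obtain ⟨a, b, hab⟩ := ih
    refine ⟨-n * b, a + t * b, fun x hx => ?_⟩
    have h := hab x hx
    rw [pow_succ, h]
    push_cast
    linear_combination (b : ℝ) * hx

/-- Any root of the map of a monic irreducible integer polynomial of degree 2 is irrational. -/
lemma irrational_of_root (p : Polynomial ℤ) (hmon : p.Monic) (hirr : Irreducible p)
    (hdeg : p.natDegree = 2) (x : ℝ) (hx : (x : ℂ) ∈ (p.map (Int.castRingHom ℂ)).roots) :
    Irrational x := by
  rintro ⟨r, rfl⟩
  set pQ := p.map (Int.castRingHom ℚ) with hpQ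
  have hirrQ : Irreducible pQ :=
    (hmon.irreducible_iff_irreducible_map_fraction_map (K := ℚ)).mp hirr
  have hmonQ : pQ.Monic := hmon.map _
  have hdegQ : pQ.natDegree = 2 := by
    rw [hpQ, hmon.natDegree_map]; exact hdeg
  -- the root is a root of pQ
  have hcomp : (Int.castRingHom ℂ) = (algebraMap ℚ ℂ).comp (Int.castRingHom ℚ) := by
    ext n; simp
  have hroot : pQ.eval r = 0 := by
    have hmem := isRoot_of_mem_roots hx
    rw [IsRoot, hcomp, ← Polynomial.map_map] at hmem
    have hcast : ((r : ℝ) : ℂ) = algebraMap ℚ ℂ r := by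
      simp
    rw [hcast, Polynomial.eval_map, Polynomial.eval₂_at_apply] at hmem
    have := (_root_.map_eq_zero (algebraMap ℚ ℂ)).mp hmem
    exact this
  have hdvd : X - C r ∣ pQ := dvd_iff_isRoot.mpr hroot
  obtain ⟨g, hg⟩ := hdvd
  rcases hirrQ.isUnit_or_isUnit hg with hu | hu
  · have : (X - C r).natDegree = 0 := natDegree_eq_zero_of_isUnit hu
    simp [natDegree_X_sub_C] at this
  · have hgne : g ≠ 0 := by
      rintro rfl
      rw [mul_zero] at hg
      exact hmonQ.ne_zero hg
    have : g.natDegree = 1 := by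
      have := natDegree_mul (X_sub_C_ne_zero r) hgne
      rw [← hg, hdegQ, natDegree_X_sub_C] at this
      omega
    have : g.natDegree = 0 := natDegree_eq_zero_of_isUnit hu
    omega

/-- `α1` is a Perron number of degree 2 with (real) conjugate `α2`. -/
def IsPerronQuadratic (α1 α2 : ℝ) : Prop :=
  1 < α1 ∧ |α2| < α1 ∧
  ∃ p : Polynomial ℤ, p.Monic ∧ Irreducible p ∧ p.natDegree = 2 ∧
    (p.map (Int.castRingHom ℂ)).roots = {(α1 : ℂ), (α2 : ℂ)}

/-- For a quadratic Perron number `α1` with conjugate `α2` and norm `α1·α2 ∉ {1, -1}`,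
every relation `α1^m1 · α2^m2 = 1` has `m1 = m2 = 0`. -/
theorem quadratic_relations_trivial_of_norm_ne_pm_one
    (α1 α2 : ℝ) (h : IsPerronQuadratic α1 α2)
    (h1 : α1 * α2 ≠ 1) (h2 : α1 * α2 ≠ -1) :
    ∀ m1 m2 : ℤ, α1 ^ m1 * α2 ^ m2 = 1 → m1 = 0 ∧ m2 = 0 := by
  obtain ⟨hα1, hlt, p, hmon, hirr, hdeg, hroots⟩ := h
  set q := p.map (Int.castRingHom ℂ) with hqdef
  have hqmon : q.Monic := hmon.map _
  have hqdeg : q.natDegree = 2 := by rw [hqdef, hmon.natDegree_map]; exact hdeg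
  have hq : q = (X - C (α1 : ℂ)) * (X - C (α2 : ℂ)) := by
    have hsp : q.Splits := IsAlgClosed.splits q
    have := hsp.eq_prod_roots_of_monic hqmon
    rw [hroots] at this
    simpa using this
  -- irrationality of the roots
  have irr1 : Irrational α1 := irrational_of_root p hmon hirr hdeg α1
    (by rw [hroots]; exact Multiset.mem_cons_self _ _)
  have irr2 : Irrational α2 := irrational_of_root p hmon hirr hdeg α2
    (by rw [hroots]; simp)
  -- the coefficients
  set n : ℤ := p.coeff 0 with hndef
  set t : ℤ := -(p.coeff 1) with htdef
  have hexp : q = X ^ 2 - C ((α1 : ℂ) + α2) * X + C ((α1 : ℂ) * α2) := by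
    rw [hq]; simp only [C_add, C_mul]; ring
  have hn : (n : ℝ) = α1 * α2 := by
    have : ((n : ℤ) : ℂ) = q.coeff 0 := by
      rw [hqdef, coeff_map]; simp [hndef]
    rw [hexp] at this
    simp [coeff_add, coeff_sub, coeff_X_pow, coeff_C] at this
    exact_mod_cast this
  have ht : (t : ℝ) = α1 + α2 := by
    have : ((p.coeff 1 : ℤ) : ℂ) = q.coeff 1 := by
      rw [hqdef, coeff_map]; simp
    rw [hexp] at this
    simp [coeff_add, coeff_sub, coeff_X_pow, coeff_C, coeff_C_mul, coeff_X] at this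
    have ht2 : ((t : ℤ) : ℂ) = (α1 : ℂ) + α2 := by
      rw [htdef]; push_cast; rw [this]; ring
    exact_mod_cast ht2
  clear_value n t
  have hα2ne : α2 ≠ 0 := by
    rintro rfl; exact not_irrational_zero irr2
  have hα1pos : (0 : ℝ) < α1 := lt_trans one_pos hα1
  have hα1ne : α1 ≠ 0 := ne_of_gt hα1pos
  have hnne : (n : ℝ) ≠ 0 := by rw [hn]; exact mul_ne_zero hα1ne hα2ne
  have hn2 : 2 ≤ |n| := by
    have hn0 : n ≠ 0 := by exact_mod_cast hnne
    have hn1 : n ≠ 1 := by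
      intro he; exact h1 (by rw [← hn, he]; norm_num)
    have hnm1 : n ≠ -1 := by
      intro he; exact h2 (by rw [← hn, he]; push_cast; norm_num)
    rw [Int.abs_eq_natAbs]
    omega
  -- quadratic equations
  have hq1 : α1 ^ 2 = (t : ℝ) * α1 - n := by rw [ht, hn]; ring
  have hq2 : α2 ^ 2 = (t : ℝ) * α2 - n := by rw [ht, hn]; ring
  intro m1 m2 hrel
  -- rewrite the relation
  have hkey : α1 ^ (m1 - m2) = ((n : ℝ)) ^ (-m2) := by
    have e1 : α1 ^ m1 = α1 ^ (m1 - m2) * α1 ^ m2 := by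
      rw [← zpow_add₀ hα1ne]; ring_nf
    have e2 : α1 ^ m2 * α2 ^ m2 = ((n : ℝ)) ^ m2 := by
      rw [← mul_zpow, hn]
    have : α1 ^ (m1 - m2) * ((n : ℝ)) ^ m2 = 1 := by
      rw [← e2, ← mul_assoc, ← e1]; exact hrel
    rw [zpow_neg]
    exact eq_inv_of_mul_eq_one_left this
  set k : ℤ := m1 - m2 with hkdef
  have hk0 : k = 0 := by
    by_contra hk
    set K : ℕ := k.natAbs with hKdef
    have hK1 : 1 ≤ K := by omega
    -- α1 ^ K is rational
    have hrat : ∃ r : ℚ, α1 ^ K = (r : ℝ) := by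
      have hbase : ∃ r : ℚ, α1 ^ k = (r : ℝ) := by
        refine ⟨(n : ℚ) ^ (-m2), ?_⟩
        rw [hkey]; push_cast; ring
      obtain ⟨r, hr⟩ := hbase
      rcases Int.natAbs_eq k with he | he
      · exact ⟨r, by rw [← zpow_natCast α1 K, ← he, hr]⟩
      · refine ⟨r⁻¹, ?_⟩
        rw [← zpow_natCast α1 K, show (K : ℤ) = -k by omega, zpow_neg, hr]
        push_cast
        ring
    obtain ⟨r, hr⟩ := hrat
    obtain ⟨a, b, hab⟩ := exists_lin t n K
    have h1K : α1 ^ K = a + b * α1 := hab α1 hq1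
    have h2K : α2 ^ K = a + b * α2 := hab α2 hq2
    by_cases hb : b = 0
    · -- then α1^K = α2^K, contradicting |α2| < α1
      have heq : α1 ^ K = α2 ^ K := by rw [h1K, h2K, hb]; simp
      have hlt' : |α2| ^ K < α1 ^ K :=
        pow_lt_pow_left₀ hlt (abs_nonneg _) (by omega)
      have : |α2| ^ K = α1 ^ K := by
        rw [← abs_pow, ← heq, abs_pow, abs_of_pos hα1pos]
      linarith
    · -- α1 is rational, contradiction
      have hb' : (b : ℝ) ≠ 0 := Int.cast_ne_zero.mpr hb
      refine irr1 ⟨(r - a) / b, ?_⟩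
      push_cast
      rw [eq_comm]
      field_simp
      rw [hr] at h1K
      linarith
  -- now m1 = m2 and (n:ℝ)^m1 = 1
  have hm : m1 = m2 := by omega
  have hrel' : ((n : ℝ)) ^ m1 = 1 := by
    rw [hn, mul_zpow, hm]
    rw [hm] at hrel
    exact hrel
  have hm10 : m1 = 0 := by
    have habs : (2 : ℝ) ≤ |(n : ℝ)| := by
      rw [← Int.cast_abs]; exact_mod_cast hn2
    have hA1 : (1 : ℝ) < ((n : ℝ)) ^ (2 : ℕ) := by
      nlinarith [abs_nonneg ((n : ℝ)), sq_abs ((n : ℝ))]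
    have hsq : (((n : ℝ)) ^ (2 : ℕ)) ^ m1 = (((n : ℝ)) ^ (2 : ℕ)) ^ (0 : ℤ) := by
      rw [← zpow_natCast ((n : ℝ)) 2, ← zpow_mul, mul_comm, zpow_mul, hrel']
      norm_num
    exact zpow_right_injective₀ (by linarith) (by linarith) hsq
  exact ⟨hm10, by omega⟩
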